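/- Let Ω ⊆ ℝ³ be open, let m, h : Ω → ℝ³ be continuously differentiable vector fields with curl h = 0 on Ω, and let v : Ω → ℝ³ be a smooth (C^∞) vector field with compact support contained in Ω satisfying div v = 0 on Ω. Then b(v, m, h) = − b(m, h, v). -/

import Mathlib

open MeasureTheory Set
open scoped RealInnerProductSpace

noncomputable section

abbrev E3 : Type := EuclideanSpace ℝ (Fin 3)

/-- The partial derivative `∂ f^j / ∂ x_i` of a vector field. -/
def pd (f : E3 → E3) (i j : Fin 3) (x : E3) : ℝ :=
  fderiv ℝ (fun y => f y j) x (EuclideanSpace.single i 1)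

/-- The divergence of a vector field. -/
def vdiv (f : E3 → E3) (x : E3) : ℝ := ∑ i, pd f i i x

/-- The `k`-th component of the three-dimensional curl. -/
def ccomp (f : E3 → E3) (k : Fin 3) (x : E3) : ℝ :=
  pd f (k + 1) (k + 2) x - pd f (k + 2) (k + 1) x

/-- The trilinear form `b(m,h,u) = ∑_{i,j} ∫_Ω m^i ∂_i h^j u^j`. -/
def triB (Ω : Set E3) (m h u : E3 → E3) : ℝ :=
  ∑ i, ∑ j, ∫ x in Ω, m x i * pd h i j x * u x j

/- auxiliary lemmas -/

lemma key_ibp {g : E3 → ℝ} (hg : Differentiable ℝ g) (hg' : Continuous (fderiv ℝ g))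
    (hsupp : HasCompactSupport g) (e : E3) : ∫ x, fderiv ℝ g x e = 0 := by
  obtain ⟨C, hC⟩ := (hsupp.fderiv ℝ).exists_bound_of_continuous hg'
  have hlip : LipschitzWith ⟨max C 0, le_max_right _ _⟩ g := by
    apply lipschitzWith_of_nnnorm_fderiv_le hg (fun x => ?_)
    exact NNReal.coe_le_coe.mp ((hC x).trans (le_max_left _ _))
  have h1 : LipschitzWith 0 (fun _ : E3 => (1:ℝ)) := LipschitzWith.const' 1
  have := LipschitzWith.integral_lineDeriv_mul_eq (μ := volume) h1 hlip hsupp (-e)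
  have hzero : ∀ x : E3, lineDeriv ℝ (fun _ => (1:ℝ)) x (-e) = 0 := fun x => by
    simp [lineDeriv]
  simp only [hzero, zero_mul, integral_zero, neg_neg, mul_one] at this
  rw [show (∫ x, fderiv ℝ g x e) = ∫ x, lineDeriv ℝ g x e from
    integral_congr_ae (Filter.Eventually.of_forall fun x => ((hg x).lineDeriv_eq_fderiv).symm),
    ← this]

lemma integrable_aux {f : E3 → ℝ} {Ω K : Set E3} (hK : IsCompact K)
    (hKΩ : K ⊆ Ω) (hf : ContinuousOn f Ω) (h0 : ∀ x ∉ K, f x = 0) : Integrable f := by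
  have hKint : IntegrableOn f K := (hf.mono hKΩ).integrableOn_compact hK
  rw [← integrableOn_univ, ← Set.union_compl_self K]
  refine hKint.union ?_
  exact (integrableOn_congr_fun (fun x hx => h0 x hx) hK.isClosed.measurableSet.compl).mpr
    integrableOn_zero

lemma comp_contDiffOn {f : E3 → E3} {Ω : Set E3} (hf : ContDiffOn ℝ 1 f Ω) (j : Fin 3) :
    ContDiffOn ℝ 1 (fun x => f x j) Ω :=
  (EuclideanSpace.proj (𝕜 := ℝ) j).contDiff.comp_contDiffOn hf

lemma comp_contDiff {f : E3 → E3} (hf : ContDiff ℝ 1 f) (j : Fin 3) :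
    ContDiff ℝ 1 (fun x => f x j) :=
  (EuclideanSpace.proj (𝕜 := ℝ) j).contDiff.comp hf

lemma pd_continuousOn {f : E3 → E3} {Ω : Set E3} (hΩ : IsOpen Ω) (hf : ContDiffOn ℝ 1 f Ω)
    (i j : Fin 3) : ContinuousOn (pd f i j) Ω :=
  ((comp_contDiffOn hf j).continuousOn_fderiv_of_isOpen hΩ le_rfl).clm_apply continuousOn_const

lemma pd_continuous {f : E3 → E3} (hf : ContDiff ℝ 1 f) (i j : Fin 3) :
    Continuous (pd f i j) :=
  ((comp_contDiff hf j).continuous_fderiv one_ne_zero).clm_apply continuous_const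

lemma comp_diffAt {f : E3 → E3} {Ω : Set E3} {j : Fin 3} (hΩ : IsOpen Ω)
    (hf : ContDiffOn ℝ 1 f Ω) {x : E3} (hx : x ∈ Ω) :
    DifferentiableAt ℝ (fun y => f y j) x :=
  ((comp_contDiffOn hf j).differentiableOn one_ne_zero).differentiableAt (hΩ.mem_nhds hx)

/-- if `curl h = 0` on Ω and `v` is a smooth, compactly supported
(in Ω) divergence-free vector field, then `b(v,m,h) = −b(m,h,v)`. -/
theorem stmt5 (Ω : Set E3) (hΩ : IsOpen Ω)
    (m h v : E3 → E3)
    (hm : ContDiffOn ℝ 1 m Ω) (hh : ContDiffOn ℝ 1 h Ω)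
    (hcurl : ∀ x ∈ Ω, ∀ k : Fin 3, ccomp h k x = 0)
    (hv : ContDiff ℝ (⊤ : ℕ∞) v) (hvsupp : HasCompactSupport v)
    (hvΩ : tsupport v ⊆ Ω)
    (hdiv : ∀ x ∈ Ω, vdiv v x = 0) :
    triB Ω v m h = - triB Ω m h v := by
  set K := tsupport v with hK
  have hKc : IsCompact K := hvsupp
  have hv1 : ContDiff ℝ 1 v := hv.of_le (by simp)
  -- vanishing of v and its derivatives off K
  have hvnhd : ∀ x ∉ K, v =ᶠ[nhds x] 0 := fun x hx =>
    Filter.eventuallyEq_iff_exists_mem.2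
      ⟨Kᶜ, (isClosed_tsupport v).isOpen_compl.mem_nhds hx,
        fun y hy => image_eq_zero_of_notMem_tsupport hy⟩
  have hv0 : ∀ x ∉ K, ∀ i : Fin 3, v x i = 0 := fun x hx i => by
    rw [image_eq_zero_of_notMem_tsupport hx]; rfl
  have hpdv0 : ∀ x ∉ K, ∀ i j : Fin 3, pd v i j x = 0 := by
    intro x hx i j
    have : (fun y => v y j) =ᶠ[nhds x] (fun _ => (0:ℝ)) := by
      filter_upwards [hvnhd x hx] with y hy
      rw [hy]; rfl
    rw [pd, this.fderiv_eq, fderiv_fun_const]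
    rfl
  -- curl symmetry
  have hsym : ∀ x ∈ Ω, ∀ i j : Fin 3, pd h i j x = pd h j i x := by
    intro x hx i j
    have c0 := hcurl x hx 0
    have c1 := hcurl x hx 1
    have c2 := hcurl x hx 2
    simp only [ccomp] at c0 c1 c2
    fin_cases i <;> fin_cases j <;>
      simp_all <;> linarith
  have hKΩ : K ⊆ Ω := hvΩ
  -- continuity facts
  have hmc : ∀ j : Fin 3, ContinuousOn (fun x => m x j) Ω :=
    fun j => (comp_contDiffOn hm j).continuousOn
  have hhc : ∀ j : Fin 3, ContinuousOn (fun x => h x j) Ω :=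
    fun j => (comp_contDiffOn hh j).continuousOn
  have hvc : ∀ j : Fin 3, Continuous (fun x => v x j) :=
    fun j => (comp_contDiff hv1 j).continuous
  have pdm_c : ∀ i j : Fin 3, ContinuousOn (pd m i j) Ω := pd_continuousOn hΩ hm
  have pdh_c : ∀ i j : Fin 3, ContinuousOn (pd h i j) Ω := pd_continuousOn hΩ hh
  have pdv_c : ∀ i j : Fin 3, Continuous (pd v i j) := pd_continuous hv1
  -- integrability facts
  have int1 : ∀ i j : Fin 3, Integrable (fun x => v x i * pd m i j x * h x j) := fun i j =>
    integrable_aux hKc hKΩ (((hvc i).continuousOn.mul (pdm_c i j)).mul (hhc j))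
      (fun x hx => by rw [hv0 x hx i]; ring)
  have int2 : ∀ i j : Fin 3, Integrable (fun x => m x j * pd h i j x * v x i) := fun i j =>
    integrable_aux hKc hKΩ (((hmc j).mul (pdh_c i j)).mul (hvc i).continuousOn)
      (fun x hx => by rw [hv0 x hx i]; ring)
  have intR : ∀ i j : Fin 3, Integrable (fun x => pd v i i x * (m x j * h x j)) := fun i j =>
    integrable_aux hKc hKΩ ((pdv_c i i).continuousOn.mul ((hmc j).mul (hhc j)))
      (fun x hx => by rw [hpdv0 x hx i i]; ring)
  -- the auxiliary compactly supported functions G i j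
  have hG0 : ∀ i j : Fin 3, ∀ x ∉ K, v x i * (m x j * h x j) = 0 := fun i j x hx => by
    rw [hv0 x hx i]; ring
  have hGnhd : ∀ i j : Fin 3, ∀ x ∉ K,
      (fun y => v y i * (m y j * h y j)) =ᶠ[nhds x] (fun _ => (0:ℝ)) := by
    intro i j x hx
    filter_upwards [hvnhd x hx] with y hy
    have : v y i = 0 := by rw [hy]; rfl
    rw [this]; ring
  have hGfd0 : ∀ i j : Fin 3, ∀ x ∉ K,
      fderiv ℝ (fun y => v y i * (m y j * h y j)) x = 0 := by
    intro i j x hx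
    rw [(hGnhd i j x hx).fderiv_eq, fderiv_fun_const]
    rfl
  have hGC1 : ∀ i j : Fin 3, ContDiffOn ℝ 1 (fun x => v x i * (m x j * h x j)) Ω :=
    fun i j => (comp_contDiff hv1 i).contDiffOn.mul
      ((comp_contDiffOn hm j).mul (comp_contDiffOn hh j))
  have hGdiff : ∀ i j : Fin 3, Differentiable ℝ (fun x => v x i * (m x j * h x j)) := by
    intro i j x
    by_cases hx : x ∈ Ω
    · exact (((comp_contDiff hv1 i).differentiable one_ne_zero) x).mul
        ((comp_diffAt hΩ hm hx).mul (comp_diffAt hΩ hh hx))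
    · have hxK : x ∉ K := fun hc => hx (hKΩ hc)
      exact ((hGnhd i j x hxK).differentiableAt_iff).mpr (differentiableAt_const 0)
  have hGfd_cont : ∀ i j : Fin 3,
      Continuous (fderiv ℝ (fun x => v x i * (m x j * h x j))) := by
    intro i j
    rw [continuous_iff_continuousAt]
    intro x
    by_cases hx : x ∈ Ω
    · exact ((hGC1 i j).continuousOn_fderiv_of_isOpen hΩ le_rfl).continuousAt (hΩ.mem_nhds hx)
    · have hxK : x ∉ K := fun hc => hx (hKΩ hc)
      have hev : (fderiv ℝ (fun y => v y i * (m y j * h y j))) =ᶠ[nhds x]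
          (fun _ => (0 : E3 →L[ℝ] ℝ)) := by
        filter_upwards [(isClosed_tsupport v).isOpen_compl.mem_nhds hxK] with y hy
        exact hGfd0 i j y hy
      exact continuousAt_const.congr hev.symm
  have hGsupp : ∀ i j : Fin 3, HasCompactSupport (fun x => v x i * (m x j * h x j)) :=
    fun i j => HasCompactSupport.intro hKc (hG0 i j)
  have hGint0 : ∀ i j : Fin 3,
      ∫ x, fderiv ℝ (fun y => v y i * (m y j * h y j)) x (EuclideanSpace.single i 1) = 0 :=
    fun i j => key_ibp (hGdiff i j) (hGfd_cont i j) (hGsupp i j) _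
  -- pointwise product rule identity
  have hpt : ∀ i j : Fin 3, ∀ x : E3,
      v x i * pd m i j x * h x j + m x j * pd h i j x * v x i
        = fderiv ℝ (fun y => v y i * (m y j * h y j)) x (EuclideanSpace.single i 1)
          - pd v i i x * (m x j * h x j) := by
    intro i j x
    by_cases hx : x ∈ Ω
    · have dv : DifferentiableAt ℝ (fun y => v y i) x :=
        ((comp_contDiff hv1 i).differentiable one_ne_zero) x
      have dm : DifferentiableAt ℝ (fun y => m y j) x := comp_diffAt hΩ hm hx
      have dh : DifferentiableAt ℝ (fun y => h y j) x := comp_diffAt hΩ hh hx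
      have hmul : fderiv ℝ (fun y => v y i * (m y j * h y j)) x =
          v x i • fderiv ℝ (fun y => m y j * h y j) x
            + (m x j * h x j) • fderiv ℝ (fun y => v y i) x :=
        fderiv_mul dv (dm.mul dh)
      have hmul2 : fderiv ℝ (fun y => m y j * h y j) x =
          m x j • fderiv ℝ (fun y => h y j) x + h x j • fderiv ℝ (fun y => m y j) x :=
        fderiv_mul dm dh
      simp only [hmul, hmul2, ContinuousLinearMap.add_apply, ContinuousLinearMap.coe_smul',
        Pi.smul_apply, smul_eq_mul, pd]
      ring
    · have hxK : x ∉ K := fun hc => hx (hKΩ hc)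
      rw [hv0 x hxK i, hpdv0 x hxK i i, hGfd0 i j x hxK]
      simp
  -- per-pair integral identity
  have hpair : ∀ i j : Fin 3,
      (∫ x, v x i * pd m i j x * h x j) + (∫ x, m x j * pd h i j x * v x i)
        = - ∫ x, pd v i i x * (m x j * h x j) := by
    intro i j
    have hfd_int : Integrable (fun x =>
        fderiv ℝ (fun y => v y i * (m y j * h y j)) x (EuclideanSpace.single i 1)) := by
      refine (((int1 i j).add (int2 i j)).add (intR i j)).congr
        (Filter.Eventually.of_forall fun x => ?_)
      have := hpt i j x
      simp only [Pi.add_apply]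
      linarith
    rw [← integral_add (int1 i j) (int2 i j)]
    rw [show (fun x => v x i * pd m i j x * h x j + m x j * pd h i j x * v x i)
        = fun x => fderiv ℝ (fun y => v y i * (m y j * h y j)) x (EuclideanSpace.single i 1)
            - pd v i i x * (m x j * h x j) from funext (hpt i j)]
    rw [integral_sub hfd_int (intR i j), hGint0 i j, zero_sub]
  -- rewrite both trilinear forms as global integrals
  have hA : triB Ω v m h = ∑ i, ∑ j, ∫ x, v x i * pd m i j x * h x j := by
    refine Finset.sum_congr rfl fun i _ => Finset.sum_congr rfl fun j _ => ?_
    exact setIntegral_eq_integral_of_forall_compl_eq_zero fun x hx => by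
      rw [hv0 x (fun hc => hx (hKΩ hc)) i]; ring
  have hB : triB Ω m h v = ∑ i, ∑ j, ∫ x, m x j * pd h i j x * v x i := by
    rw [triB, Finset.sum_comm]
    refine Finset.sum_congr rfl fun i _ => Finset.sum_congr rfl fun j _ => ?_
    refine (setIntegral_congr_fun hΩ.measurableSet fun x hx => by rw [hsym x hx j i]).trans ?_
    exact setIntegral_eq_integral_of_forall_compl_eq_zero fun x hx => by
      rw [hv0 x (fun hc => hx (hKΩ hc)) i]; ring
  -- sum of the R-terms vanishes
  have hRj : ∀ j : Fin 3, ∑ i, ∫ x, pd v i i x * (m x j * h x j) = 0 := by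
    intro j
    rw [← integral_finset_sum _ (fun i _ => intR i j)]
    have hz : ∀ x : E3, ∑ i : Fin 3, pd v i i x * (m x j * h x j) = 0 := by
      intro x
      rw [← Finset.sum_mul]
      by_cases hx : x ∈ Ω
      · have := hdiv x hx
        rw [vdiv] at this
        rw [this, zero_mul]
      · have hxK : x ∉ K := fun hc => hx (hKΩ hc)
        rw [Finset.sum_eq_zero fun i _ => hpdv0 x hxK i i, zero_mul]
    rw [show (fun x => ∑ i : Fin 3, pd v i i x * (m x j * h x j)) = fun _ => (0:ℝ) from
      funext hz, integral_zero]
  -- conclusion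
  rw [eq_neg_iff_add_eq_zero, hA, hB, ← Finset.sum_add_distrib]
  simp_rw [← Finset.sum_add_distrib, hpair]
  rw [Finset.sum_comm]
  refine Finset.sum_eq_zero fun j _ => ?_
  rw [Finset.sum_neg_distrib, hRj j, neg_zero]
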